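/- arXiv:2403.10502 — 9 statements merged into one kernel-verified Lean document; each statement's English description precedes it below -/
import Mathlib

section
/- Let Σ̄ ⊆ Σ be finite alphabets, let P̄ be a probability distribution on the worlds over Σ̄, and let P be its extension to the worlds over Σ, defined by P(w) = P̄(w↾Σ̄) / 2^{|Σ ∖ Σ̄|}. Let φ and ψ be formulas with letters in Σ̄, with model sets M̄, N̄ over Σ̄ and lifted model sets M, N over Σ. Then M̄ ≤_{P̄} N̄ if and only if M ≤_P N, and M̄ <_{P̄} N̄ if and only if M <_P N. -/
open scoped Classical

/-- The possible part of a set of worlds: its elements with positive probability. -/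
def pplus {W : Type*} (P : W → ℝ) (A : Set W) : Set W := {w ∈ A | 0 < P w}

/-- P-entailment: every possible model of `A` is a model of `B`. -/
def Pent {W : Type*} (P : W → ℝ) (A B : Set W) : Prop := pplus P A ⊆ B

/-- Strict P-entailment. -/
def PentS {W : Type*} (P : W → ℝ) (A B : Set W) : Prop := Pent P A B ∧ ¬ Pent P B A

/-- Extension of a probability distribution from a subalphabet preserves P-entailment
and strict P-entailment between (the model sets of) formulas over the subalphabet. -/
theorem extension_preserves_Pentailment
    {Sig : Type*} [Fintype Sig] [DecidableEq Sig] (Sb : Finset Sig)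
    (Pb : ((↥Sb) → Bool) → ℝ)
    (hPb0 : ∀ v, 0 ≤ Pb v) (hPb1 : ∑ v, Pb v = 1)
    (P : (Sig → Bool) → ℝ)
    (hP : ∀ w : Sig → Bool, P w = Pb (fun i => w i.1) / 2 ^ (Sbᶜ.card))
    (Mb Nb : Set ((↥Sb) → Bool)) (M N : Set (Sig → Bool))
    (hM : M = {w | (fun i : ↥Sb => w i.1) ∈ Mb})
    (hN : N = {w | (fun i : ↥Sb => w i.1) ∈ Nb}) :
    (Pent Pb Mb Nb ↔ Pent P M N) ∧ (PentS Pb Mb Nb ↔ PentS P M N) := by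
  have hpow : (0:ℝ) < 2 ^ (Sbᶜ.card) := by positivity
  have hpos : ∀ w : Sig → Bool, 0 < P w ↔ 0 < Pb (fun i : ↥Sb => w i.1) := by
    intro w
    rw [hP w]
    constructor
    · intro h
      by_contra hle
      push_neg at hle
      have : Pb (fun i : ↥Sb => w i.1) / 2 ^ (Sbᶜ.card) ≤ 0 :=
        div_nonpos_of_nonpos_of_nonneg hle (le_of_lt hpow)
      linarith
    · intro h; exact div_pos h hpow
  have key : ∀ (Ab Bb : Set ((↥Sb) → Bool)),
      Pent Pb Ab Bb ↔ Pent P {w | (fun i : ↥Sb => w i.1) ∈ Ab} {w | (fun i : ↥Sb => w i.1) ∈ Bb} := by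
    intro Ab Bb
    constructor
    · intro h w hw
      obtain ⟨hwA, hwP⟩ := hw
      exact h ⟨hwA, (hpos w).mp hwP⟩
    · intro h v hv
      obtain ⟨hvA, hvP⟩ := hv
      set w : Sig → Bool := fun i => if h : i ∈ Sb then v ⟨i, h⟩ else false with hw
      have hr : (fun i : ↥Sb => w i.1) = v := by
        funext i; simp [hw, i.2]
      have : w ∈ {w | (fun i : ↥Sb => w i.1) ∈ Bb} := by
        apply h
        refine ⟨by simpa [hr] using hvA, ?_⟩
        rw [hpos w, hr]; exact hvP
      simpa [hr] using this
  have h1 : Pent Pb Mb Nb ↔ Pent P M N := by rw [hM, hN]; exact key Mb Nb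
  have h2 : Pent Pb Nb Mb ↔ Pent P N M := by rw [hM, hN]; exact key Nb Mb
  exact ⟨h1, by unfold PentS; rw [h1, h2]⟩
end

section
/- Let Σ be a finite alphabet, Σ₀ ⊆ Σ, and let φ be a satisfiable formula with letters in Σ₀, with nonempty model set M₀ ⊆ (Σ₀ → Bool); let M = {w : Σ → Bool | w↾Σ₀ ∈ M₀} be its model set over Σ. Under the uniform probability distribution P(w) = 2^{−|Σ|} on the worlds over Σ, the Shannon knowledge measure satisfies κ_S(M) = −log₂ P(M) = |Σ₀| − log₂ |M₀|. That is, under the uniform distribution κ_S coincides with Straccia's knowledge measure κ_h(φ) = |Σ_φ| − log₂ |[φ]_{Σ_φ}|. -/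
open scoped Classical

/-- The probability of a set of worlds: the sum of the probabilities of its elements. -/
noncomputable def Pr {W : Type*} [Fintype W] (P : W → ℝ) (A : Set W) : ℝ :=
  ∑ w, Set.indicator A P w

/-- The Shannon knowledge measure of a set of worlds. -/
noncomputable def kS {W : Type*} [Fintype W] (P : W → ℝ) (A : Set W) : ℝ :=
  -Real.logb 2 (Pr P A)

lemma card_model_set {Sig : Type*} [Fintype Sig] [DecidableEq Sig] (S0 : Finset Sig)
    (M0 : Finset ((↥S0) → Bool)) :
    (Finset.univ.filter (fun w : Sig → Bool => (fun i : ↥S0 => w i.1) ∈ M0)).card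
      = M0.card * 2 ^ (Fintype.card Sig - S0.card) := by
  rw [Finset.card_equiv (Equiv.piEquivPiSubtypeProd (fun x => x ∈ S0) (fun _ : Sig => Bool))
    (t := M0 ×ˢ (Finset.univ : Finset ({x : Sig // ¬ x ∈ S0} → Bool)))
    (fun w => by simp [Equiv.piEquivPiSubtypeProd, Finset.mem_product])]
  rw [Finset.card_product, Finset.card_univ, Fintype.card_fun, Fintype.card_bool]
  congr
  simp [Fintype.card_subtype_compl]

/-- Under the uniform probability distribution, the Shannon knowledge measure of a
satisfiable formula with letters in `S0` and model set `M0` over `S0` coincides with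
Straccia's knowledge measure `|S0| - log₂ |M0|`. -/
theorem shannon_km_eq_straccia_km_uniform
    {Sig : Type*} [Fintype Sig] [DecidableEq Sig] (S0 : Finset Sig)
    (M0 : Finset ((↥S0) → Bool)) (hM0 : M0.Nonempty)
    (M : Set (Sig → Bool))
    (hM : M = {w | (fun i : ↥S0 => w i.1) ∈ M0})
    (P : (Sig → Bool) → ℝ)
    (hP : ∀ w, P w = 1 / 2 ^ (Fintype.card Sig)) :
    kS P M = (S0.card : ℝ) - Real.logb 2 (M0.card) := by
  have hkn : S0.card ≤ Fintype.card Sig := Finset.card_le_univ S0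
  have hcard : (Finset.univ.filter (fun w : Sig → Bool => w ∈ M)).card
      = M0.card * 2 ^ (Fintype.card Sig - S0.card) := by
    rw [Finset.card_equiv (Equiv.refl _)
      (t := Finset.univ.filter (fun w : Sig → Bool => (fun i : ↥S0 => w i.1) ∈ M0))
      (fun w => by simp [hM])]
    exact card_model_set S0 M0
  have hPr : Pr P M = (M0.card : ℝ) * 2 ^ (Fintype.card Sig - S0.card)
      / 2 ^ (Fintype.card Sig) := by
    unfold Pr
    rw [Finset.sum_indicator_eq_sum_filter]
    rw [Finset.sum_congr rfl (fun w _ => hP w), Finset.sum_const, hcard]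
    ring
  have hM0pos : (0:ℝ) < M0.card := by exact_mod_cast Finset.card_pos.mpr hM0
  unfold kS
  rw [hPr, Real.logb_div (by positivity) (by positivity),
    Real.logb_mul (by positivity) (by positivity),
    Real.logb_pow, Real.logb_pow, Real.logb_self_eq_one (by norm_num)]
  rw [Nat.cast_sub hkn]
  ring
end

section
/- Let A ⊆ X be nonempty (the possible models of a P-satisfiable belief) and B ⊆ W. Then the KM-contraction of A by B (the union of the probability-maximal remainders) equals A ∪ Max_P(X ∖ B) if A ⊆ B, and equals A otherwise. -/
open scoped Classical

/-- The set of possible worlds: those with positive probability. -/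
def poss {W : Type*} (P : W → ℝ) : Set W := {w | 0 < P w}

/-- The family of possible remainders of `A` (a nonempty subset of the possible worlds)
with respect to `B`. -/
def possRem {W : Type*} (P : W → ℝ) (A B : Set W) : Set (Set W) :=
  if poss P ⊆ B then {A}
  else {S | S ⊆ poss P ∧ A ⊆ S ∧ ¬ S ⊆ B}

/-- The remainders of `A` with respect to `B`: the inclusion-minimal possible remainders. -/
def remainders {W : Type*} (P : W → ℝ) (A B : Set W) : Set (Set W) :=
  {S ∈ possRem P A B | ∀ S' ∈ possRem P A B, ¬ S' ⊂ S}

/-- The probability-maximal elements of a set of worlds. -/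
def MaxP {W : Type*} (P : W → ℝ) (S : Set W) : Set W :=
  {w ∈ S | ∀ w' ∈ S, P w' ≤ P w}

lemma Pr_eq_sum {W : Type*} [Fintype W] (P : W → ℝ) (A : Set W) :
    Pr P A = ∑ w ∈ A.toFinset, P w := by
  rw [Pr, Finset.sum_indicator_eq_sum_filter]
  congr 1; ext w; simp

lemma Pr_insert {W : Type*} [Fintype W] (P : W → ℝ) {A : Set W} {x : W}
    (hx : x ∉ A) : Pr P (insert x A) = P x + Pr P A := by
  rw [Pr, Pr, Set.insert_eq, Set.indicator_union_of_disjoint (by simpa using hx) P]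
  simp only [Pi.add_apply]
  rw [Finset.sum_add_distrib]
  congr 1
  simp [Set.indicator_apply]

/-- The KM-contraction of `A` by `B`: the union of the probability-maximal
(equivalently, Shannon-knowledge-minimal) remainders. It equals
`A ∪ Max_P(X ∖ B)` if `A ⊆ B`, and `A` otherwise. -/
theorem KMcontraction_characterisation
    {W : Type*} [Fintype W] [Nonempty W] (P : W → ℝ)
    (hP0 : ∀ w, 0 ≤ P w) (hP1 : ∑ w, P w = 1)
    (A B : Set W) (hA : A ⊆ poss P) (hAne : A.Nonempty) :
    (A ⊆ B →
      ⋃₀ {S ∈ remainders P A B | ∀ S' ∈ remainders P A B, Pr P S' ≤ Pr P S}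
        = A ∪ MaxP P (poss P \ B)) ∧
    (¬ A ⊆ B →
      ⋃₀ {S ∈ remainders P A B | ∀ S' ∈ remainders P A B, Pr P S' ≤ Pr P S}
        = A) := by
  classical
  constructor
  · -- case A ⊆ B
    intro hAB
    by_cases hXB : poss P ⊆ B
    · -- possRem = {A}
      have hrem : remainders P A B = {A} := by
        unfold remainders possRem
        rw [if_pos hXB]
        ext S
        constructor
        · rintro ⟨hS, -⟩; exact hS
        · rintro rfl
          refine ⟨rfl, ?_⟩
          rintro S' rfl
          exact fun h => h.2 h.1
      have hmax : {S ∈ remainders P A B | ∀ S' ∈ remainders P A B, Pr P S' ≤ Pr P S}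
          = {A} := by
        rw [hrem]
        ext S
        constructor
        · rintro ⟨hS, -⟩; exact hS
        · rintro rfl
          exact ⟨rfl, by rintro S' rfl; exact le_refl _⟩
      have hempty : poss P \ B = ∅ := by
        rw [Set.diff_eq_empty]; exact hXB
      rw [hmax, hempty]
      have : MaxP P (∅ : Set W) = ∅ := by
        ext w; simp [MaxP]
      rw [this, Set.union_empty, Set.sUnion_singleton]
    · -- possRem is the big family
      have hpr : possRem P A B = {S | S ⊆ poss P ∧ A ⊆ S ∧ ¬ S ⊆ B} := by
        unfold possRem; rw [if_neg hXB]
      have hDne : (poss P \ B).Nonempty := by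
        rcases Set.not_subset.mp hXB with ⟨x, hx1, hx2⟩
        exact ⟨x, hx1, hx2⟩
      -- remainders = image of insert
      have hrem : remainders P A B = (fun x => insert x A) '' (poss P \ B) := by
        ext S
        constructor
        · rintro ⟨hS, hmin⟩
          rw [hpr] at hS
          obtain ⟨hSX, hAS, hSB⟩ := hS
          rcases Set.not_subset.mp hSB with ⟨x, hxS, hxB⟩
          have hxX : x ∈ poss P := hSX hxS
          have hmem : insert x A ∈ possRem P A B := by
            rw [hpr]
            refine ⟨Set.insert_subset hxX hA, Set.subset_insert _ _, ?_⟩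
            intro h; exact hxB (h (Set.mem_insert _ _))
          have hsub : insert x A ⊆ S := Set.insert_subset hxS hAS
          have : ¬ insert x A ⊂ S := hmin _ hmem
          have heq : S = insert x A := by
            by_contra hne
            exact this ⟨hsub, fun h => hne (Set.Subset.antisymm h hsub)⟩
          exact ⟨x, ⟨hxX, hxB⟩, heq.symm⟩
        · rintro ⟨x, ⟨hxX, hxB⟩, rfl⟩
          have hmem : insert x A ∈ possRem P A B := by
            rw [hpr]
            refine ⟨Set.insert_subset hxX hA, Set.subset_insert _ _, ?_⟩
            intro h; exact hxB (h (Set.mem_insert _ _))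
          refine ⟨hmem, ?_⟩
          rintro S' hS' hss
          rw [hpr] at hS'
          obtain ⟨hS'X, hAS', hS'B⟩ := hS'
          rcases Set.not_subset.mp hS'B with ⟨y, hyS', hyB⟩
          have hy : y ∈ insert x A := hss.1 hyS'
          have hyx : y = x := by
            rcases hy with h | h
            · exact h
            · exact absurd (hAB h) hyB
          have : insert x A ⊆ S' := Set.insert_subset (hyx ▸ hyS') hAS'
          exact hss.2 this
      -- x ∉ A for x ∈ poss P \ B
      have hnotA : ∀ x ∈ poss P \ B, x ∉ A := fun x hx hxA => hx.2 (hAB hxA)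
      -- the max-probability set
      have hmax : {S ∈ remainders P A B | ∀ S' ∈ remainders P A B, Pr P S' ≤ Pr P S}
          = (fun x => insert x A) '' MaxP P (poss P \ B) := by
        ext S
        constructor
        · rintro ⟨hS, hSmax⟩
          rw [hrem] at hS
          obtain ⟨x, hxD, rfl⟩ := hS
          refine ⟨x, ⟨hxD, ?_⟩, rfl⟩
          intro y hyD
          have hy : insert y A ∈ remainders P A B := by
            rw [hrem]; exact ⟨y, hyD, rfl⟩
          have := hSmax _ hy
          rw [Pr_insert P (hnotA x hxD), Pr_insert P (hnotA y hyD)] at this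
          linarith
        · rintro ⟨x, ⟨hxD, hxmax⟩, rfl⟩
          refine ⟨by rw [hrem]; exact ⟨x, hxD, rfl⟩, ?_⟩
          intro S' hS'
          rw [hrem] at hS'
          obtain ⟨y, hyD, rfl⟩ := hS'
          rw [Pr_insert P (hnotA x hxD), Pr_insert P (hnotA y hyD)]
          have := hxmax y hyD
          linarith
      -- MaxP is nonempty
      have hMne : (MaxP P (poss P \ B)).Nonempty := by
        obtain ⟨a, ha, hmax'⟩ :=
          Set.exists_max_image (poss P \ B) P (Set.toFinite _) hDne
        exact ⟨a, ha, hmax'⟩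
      rw [hmax]
      ext w
      simp only [Set.mem_sUnion, Set.mem_image, Set.mem_union]
      constructor
      · rintro ⟨S, ⟨x, hx, rfl⟩, hwS⟩
        rcases hwS with h | h
        · right; exact h ▸ hx
        · left; exact h
      · rintro (h | h)
        · obtain ⟨x, hx⟩ := hMne
          exact ⟨insert x A, ⟨x, hx, rfl⟩, Set.mem_insert_iff.mpr (Or.inr h)⟩
        · exact ⟨insert w A, ⟨w, h, rfl⟩, Set.mem_insert _ _⟩
  · -- case ¬ A ⊆ B
    intro hAB
    have hXB : ¬ poss P ⊆ B := fun h => hAB (fun x hx => h (hA hx))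
    have hpr : possRem P A B = {S | S ⊆ poss P ∧ A ⊆ S ∧ ¬ S ⊆ B} := by
      unfold possRem; rw [if_neg hXB]
    have hAmem : A ∈ possRem P A B := by
      rw [hpr]; exact ⟨hA, Set.Subset.refl _, hAB⟩
    have hrem : remainders P A B = {A} := by
      ext S
      constructor
      · rintro ⟨hS, hmin⟩
        rw [hpr] at hS
        have hAS : A ⊆ S := hS.2.1
        have : ¬ A ⊂ S := hmin _ hAmem
        by_contra hne
        exact this ⟨hAS, fun h => hne (Set.Subset.antisymm h hAS)⟩
      · rintro rfl
        refine ⟨hAmem, ?_⟩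
        intro S' hS' hss
        rw [hpr] at hS'
        exact hss.2 hS'.2.1
    have hmax : {S ∈ remainders P A B | ∀ S' ∈ remainders P A B, Pr P S' ≤ Pr P S}
        = {A} := by
      rw [hrem]
      ext S
      constructor
      · rintro ⟨hS, -⟩; exact hS
      · rintro rfl
        exact ⟨rfl, by rintro S' rfl; exact le_refl _⟩
    rw [hmax, Set.sUnion_singleton]
end

section
/- Let A, B, B' ⊆ W with A⁺ ≠ ∅. The KM-contraction operator C satisfies the AGM contraction postulates relative to P-entailment: (÷1) inclusion: A⁺ ⊆ C(A,B); (÷2) vacuity: if A⁺ ⊄ B then C(A,B) ≡_P A; (÷3) success: if X ⊄ B then C(A,B) ⊄ B; (÷4) extensionality: if B ∩ X = B' ∩ X then C(A,B) = C(A,B'); (÷5) recovery: C(A,B) ∩ B ⊆ A; (÷6) conjunctive overlap: C(A, B ∩ B') ⊆ C(A,B) ∪ C(A,B'); (÷7) conjunctive inclusion: if C(A, B ∩ B') ⊄ B then C(A,B) ⊆ C(A, B ∩ B'). -/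
open scoped Classical

/-- The KM-contraction of `A` by `B`. -/
noncomputable def Ckm {W : Type*} (P : W → ℝ) (A B : Set W) : Set W :=
  if A ∩ poss P ⊆ B then (A ∩ poss P) ∪ MaxP P (poss P \ B) else A ∩ poss P

lemma Ckm_pos {W : Type*} (P : W → ℝ) {A B : Set W} (h : A ∩ poss P ⊆ B) :
    Ckm P A B = (A ∩ poss P) ∪ MaxP P (poss P \ B) := by
  unfold Ckm; exact if_pos h

lemma Ckm_neg {W : Type*} (P : W → ℝ) {A B : Set W} (h : ¬ A ∩ poss P ⊆ B) :
    Ckm P A B = A ∩ poss P := by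
  unfold Ckm; exact if_neg h

lemma MaxP_nonempty {W : Type*} [Fintype W] (P : W → ℝ) {S : Set W}
    (hS : S.Nonempty) : (MaxP P S).Nonempty := by
  obtain ⟨b, hb, hmax⟩ := Set.Finite.exists_maximalFor P S (Set.toFinite S) hS
  exact ⟨b, hb, fun a ha => by
    rcases le_total (P a) (P b) with h | h
    · exact h
    · exact hmax ha h⟩

/-- The KM-contraction operator satisfies the AGM contraction postulates
(÷1)-(÷7), stated relative to P-entailment; since the contraction output is
contained in the set of possible worlds, the P-entailments reduce to inclusions,
and P-equivalence to equality of possible parts. -/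
theorem KMcontraction_satisfies_AGM
    {W : Type*} [Fintype W] [Nonempty W] (P : W → ℝ)
    (hP0 : ∀ w, 0 ≤ P w) (hP1 : ∑ w, P w = 1)
    (A B B' : Set W) (hA : (A ∩ poss P).Nonempty) :
    -- (÷1) inclusion
    (A ∩ poss P ⊆ Ckm P A B) ∧
    -- (÷2) vacuity
    (¬ A ∩ poss P ⊆ B → Ckm P A B ∩ poss P = A ∩ poss P) ∧
    -- (÷3) success
    (¬ poss P ⊆ B → ¬ Ckm P A B ⊆ B) ∧
    -- (÷4) extensionality
    (B ∩ poss P = B' ∩ poss P → Ckm P A B = Ckm P A B') ∧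
    -- (÷5) recovery
    (Ckm P A B ∩ B ⊆ A) ∧
    -- (÷6) conjunctive overlap
    (Ckm P A (B ∩ B') ⊆ Ckm P A B ∪ Ckm P A B') ∧
    -- (÷7) conjunctive inclusion
    (¬ Ckm P A (B ∩ B') ⊆ B → Ckm P A B ⊆ Ckm P A (B ∩ B')) := by
  have incl : ∀ C : Set W, A ∩ poss P ⊆ Ckm P A C := by
    intro C
    by_cases hc : A ∩ poss P ⊆ C
    · rw [Ckm_pos P hc]; exact Set.subset_union_left
    · rw [Ckm_neg P hc]
  refine ⟨incl B, ?_, ?_, ?_, ?_, ?_, ?_⟩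
  · -- vacuity
    intro h
    rw [Ckm_neg P h]
    ext w; exact ⟨fun hw => hw.1, fun hw => ⟨hw, hw.2⟩⟩
  · -- success
    intro h hsub
    by_cases hc : A ∩ poss P ⊆ B
    · rw [Ckm_pos P hc] at hsub
      have hne : (poss P \ B).Nonempty := by
        obtain ⟨w, hw, hwB⟩ := Set.not_subset.mp h
        exact ⟨w, hw, hwB⟩
      obtain ⟨w, hw⟩ := MaxP_nonempty P hne
      exact hw.1.2 (hsub (Or.inr hw))
    · rw [Ckm_neg P hc] at hsub
      exact hc hsub
  · -- extensionality
    intro hBB'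
    have h1 : (A ∩ poss P ⊆ B) ↔ (A ∩ poss P ⊆ B') := by
      constructor <;> intro hs w hw
      · have : w ∈ B ∩ poss P := ⟨hs hw, hw.2⟩
        rw [hBB'] at this; exact this.1
      · have : w ∈ B' ∩ poss P := ⟨hs hw, hw.2⟩
        rw [← hBB'] at this; exact this.1
    have h2 : poss P \ B = poss P \ B' := by
      ext w
      constructor <;> rintro ⟨hw, hwB⟩ <;> refine ⟨hw, fun hwB' => hwB ?_⟩
      · have : w ∈ B' ∩ poss P := ⟨hwB', hw⟩
        rw [← hBB'] at this; exact this.1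
      · have : w ∈ B ∩ poss P := ⟨hwB', hw⟩
        rw [hBB'] at this; exact this.1
    by_cases hc : A ∩ poss P ⊆ B
    · rw [Ckm_pos P hc, Ckm_pos P (h1.mp hc), h2]
    · rw [Ckm_neg P hc, Ckm_neg P (fun hc' => hc (h1.mpr hc'))]
  · -- recovery
    intro w hw
    by_cases hc : A ∩ poss P ⊆ B
    · rw [Ckm_pos P hc] at hw
      rcases hw.1 with h | h
      · exact h.1
      · exact absurd hw.2 h.1.2
    · rw [Ckm_neg P hc] at hw
      exact hw.1.1
  · -- conjunctive overlap
    intro w hw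
    by_cases hc : A ∩ poss P ⊆ B ∩ B'
    · have hcB : A ∩ poss P ⊆ B := fun x hx => (hc hx).1
      have hcB' : A ∩ poss P ⊆ B' := fun x hx => (hc hx).2
      rw [Ckm_pos P hc] at hw
      rcases hw with h | h
      · exact Or.inl (incl B h)
      · rcases not_and_or.mp (fun hbb : w ∈ B ∧ w ∈ B' => h.1.2 ⟨hbb.1, hbb.2⟩) with hB | hB'
        · left
          rw [Ckm_pos P hcB]
          right
          exact ⟨⟨h.1.1, hB⟩, fun w' hw' => h.2 w' ⟨hw'.1, fun hbb => hw'.2 hbb.1⟩⟩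
        · right
          rw [Ckm_pos P hcB']
          right
          exact ⟨⟨h.1.1, hB'⟩, fun w' hw' => h.2 w' ⟨hw'.1, fun hbb => hw'.2 hbb.2⟩⟩
    · rw [Ckm_neg P hc] at hw
      exact Or.inl (incl B hw)
  · -- conjunctive inclusion
    intro h
    by_cases hc : A ∩ poss P ⊆ B ∩ B'
    · have hcB : A ∩ poss P ⊆ B := fun x hx => (hc hx).1
      rw [Ckm_pos P hc] at h ⊢
      rw [Ckm_pos P hcB]
      obtain ⟨w, hw, hwB⟩ := Set.not_subset.mp h
      have hwMax : w ∈ MaxP P (poss P \ (B ∩ B')) := by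
        rcases hw with h1 | h1
        · exact absurd (hc h1).1 hwB
        · exact h1
      intro u hu
      rcases hu with h1 | h1
      · exact Or.inl h1
      · right
        refine ⟨⟨h1.1.1, fun hbb => h1.1.2 hbb.1⟩, fun v hv => ?_⟩
        calc P v ≤ P w := hwMax.2 v hv
          _ ≤ P u := h1.2 w ⟨hwMax.1.1, hwB⟩
    · rw [Ckm_neg P hc] at h ⊢
      have hcB : ¬ A ∩ poss P ⊆ B := h
      rw [Ckm_neg P hcB]
end

section
/- Let W be a finite nonempty set and F ⊆ W nonempty (the model set of a consistent belief φ). Suppose c : Set W → Set W satisfies the classical AGM contraction postulates: (÷1) F ⊆ c(B) for all B ⊆ W; (÷2) if F ⊄ B then c(B) = F; (÷3) if B ≠ W then c(B) ⊄ B; (÷5) c(B) ∩ B ⊆ F for all B; (÷6) c(B ∩ B') ⊆ c(B) ∪ c(B') for all B, B'; (÷7) if c(B ∩ B') ⊄ B then c(B) ⊆ c(B ∩ B'). Then there exists a probability distribution P on W with P(w) > 0 for all w ∈ W such that for every B ⊆ W: c(B) = F ∪ Max_P(W ∖ B) if F ⊆ B, and c(B) = F otherwise. That is, every AGM contraction operation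 is a KM-contraction operation for a suitable probability distribution. -/
/-- Every AGM contraction operation (on a fixed consistent belief with model set `F`)
is a KM-contraction operation for a suitable everywhere-positive probability
distribution. -/
theorem AGM_contraction_is_KMcontraction
    {W : Type*} [Fintype W] [Nonempty W]
    (F : Set W) (hF : F.Nonempty)
    (c : Set W → Set W)
    (h1 : ∀ B : Set W, F ⊆ c B)
    (h2 : ∀ B : Set W, ¬ F ⊆ B → c B = F)
    (h3 : ∀ B : Set W, B ≠ Set.univ → ¬ c B ⊆ B)
    (h5 : ∀ B : Set W, c B ∩ B ⊆ F)
    (h6 : ∀ B B' : Set W, c (B ∩ B') ⊆ c B ∪ c B')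
    (h7 : ∀ B B' : Set W, ¬ c (B ∩ B') ⊆ B → c B ⊆ c (B ∩ B')) :
    ∃ P : W → ℝ, (∀ w, 0 < P w) ∧ (∑ w, P w = 1) ∧
      ∀ B : Set W,
        (F ⊆ B → c B = F ∪ MaxP P (Set.univ \ B)) ∧
        (¬ F ⊆ B → c B = F) := by
  classical
  set γ : Set W → Set W := fun S => c Sᶜ ∩ S with hγdef
  -- γ picks a nonempty subset of any nonempty S
  have hγne : ∀ S : Set W, S.Nonempty → (γ S).Nonempty := by
    intro S hS
    have hne : Sᶜ ≠ Set.univ := by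
      intro h
      obtain ⟨w, hw⟩ := hS
      exact (h ▸ Set.mem_univ w : w ∈ Sᶜ) hw
    have := h3 Sᶜ hne
    rw [Set.not_subset] at this
    obtain ⟨w, hw1, hw2⟩ := this
    exact ⟨w, hw1, by simpa using hw2⟩
  -- Arrow's axiom
  have arrow : ∀ S T : Set W, S ⊆ T → T ⊆ Fᶜ → (γ T ∩ S).Nonempty →
      γ S = γ T ∩ S := by
    intro S T hST hTF hne
    have hcompl : Tᶜ = Sᶜ ∩ (T \ S)ᶜ := by
      rw [← Set.compl_union, Set.union_diff_cancel hST]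
    have hsub1 : c Tᶜ ⊆ c Sᶜ ∪ c (T \ S)ᶜ := by
      have := h6 Sᶜ (T \ S)ᶜ
      rwa [← hcompl] at this
    have h_ge : γ T ∩ S ⊆ γ S := by
      rintro w ⟨⟨hwc, hwT⟩, hwS⟩
      rcases hsub1 hwc with h | h
      · exact ⟨h, hwS⟩
      · exfalso
        have hwmem : w ∈ (T \ S)ᶜ := fun hm => hm.2 hwS
        exact hTF hwT (h5 _ ⟨h, hwmem⟩)
    have hns : ¬ c (Sᶜ ∩ (T \ S)ᶜ) ⊆ Sᶜ := by
      rw [← hcompl, Set.not_subset]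
      obtain ⟨w, ⟨hwc, hwT⟩, hwS⟩ := hne
      exact ⟨w, hwc, by simpa using hwS⟩
    have h7' := h7 Sᶜ (T \ S)ᶜ hns
    rw [← hcompl] at h7'
    have h_le : γ S ⊆ γ T ∩ S := by
      rintro w ⟨hwc, hwS⟩
      exact ⟨⟨h7' hwc, hST hwS⟩, hwS⟩
    exact Set.Subset.antisymm h_le h_ge
  -- the revealed preference relation
  set rel : W → W → Prop := fun w w' => w ∈ γ {w, w'} with hreldef
  have hrefl : ∀ w : W, rel w w := by
    intro w
    obtain ⟨u, hu⟩ := hγne {w, w} ⟨w, by simp⟩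
    have : u = w := by
      have := hu.2; simpa using this
    subst this
    exact hu
  have htotal : ∀ w w' : W, rel w w' ∨ rel w' w := by
    intro w w'
    obtain ⟨u, hu⟩ := hγne {w, w'} ⟨w, by simp⟩
    have hmem := hu.2
    simp only [Set.mem_insert_iff, Set.mem_singleton_iff] at hmem
    rcases hmem with h | h
    · left; exact h ▸ hu
    · right
      show w' ∈ γ {w', w}
      rw [Set.pair_comm w' w]
      exact h ▸ hu
  -- if x is revealed at least as good as y and y is chosen from T, so is x
  have key : ∀ (T : Set W) (x y : W), T ⊆ Fᶜ → x ∈ T → y ∈ T → rel x y →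
      y ∈ γ T → x ∈ γ T := by
    intro T x y hTF hx hy hxy hyγ
    have hsub : ({x, y} : Set W) ⊆ T := by
      intro u hu
      rcases hu with h | h
      · exact h ▸ hx
      · exact (Set.mem_singleton_iff.mp h) ▸ hy
    have := arrow {x, y} T hsub hTF ⟨y, hyγ, by simp⟩
    have hx' : x ∈ γ T ∩ {x, y} := this ▸ hxy
    exact hx'.1
  have htrans : ∀ a b d : W, a ∈ Fᶜ → b ∈ Fᶜ → d ∈ Fᶜ →
      rel a b → rel b d → rel a d := by
    intro a b d ha hb hd hab hbd
    set T : Set W := {a, b, d} with hTdef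
    have hTF : T ⊆ Fᶜ := by
      intro u hu
      rcases hu with h | h | h
      · exact h ▸ ha
      · exact h ▸ hb
      · exact (Set.mem_singleton_iff.mp h) ▸ hd
    have haT : a ∈ T := by simp [hTdef]
    have hbT : b ∈ T := by simp [hTdef]
    have hdT : d ∈ T := by simp [hTdef]
    obtain ⟨u, hu⟩ := hγne T ⟨a, haT⟩
    have hmem := hu.2
    have haγ : a ∈ γ T := by
      simp only [hTdef, Set.mem_insert_iff, Set.mem_singleton_iff] at hmem
      rcases hmem with h | h | h
      · rwa [← h]
      · exact key T a b hTF haT hbT hab (h ▸ hu)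
      · have hbγ : b ∈ γ T := key T b d hTF hbT hdT hbd (h ▸ hu)
        exact key T a b hTF haT hbT hab hbγ
    -- from a ∈ γ T deduce rel a d
    have hsub : ({a, d} : Set W) ⊆ T := by
      intro u hu
      rcases hu with h | h
      · exact h ▸ haT
      · exact (Set.mem_singleton_iff.mp h) ▸ hdT
    have := arrow {a, d} T hsub hTF ⟨a, haγ, by simp⟩
    show a ∈ γ {a, d}
    rw [this]
    exact ⟨haγ, by simp⟩
  -- γ is the max of rel
  have maxchar : ∀ S : Set W, S ⊆ Fᶜ → S.Nonempty →
      γ S = {w ∈ S | ∀ w' ∈ S, rel w w'} := by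
    intro S hSF hSne
    ext w
    constructor
    · intro hw
      refine ⟨hw.2, fun w' hw' => ?_⟩
      have hsub : ({w, w'} : Set W) ⊆ S := by
        intro u hu
        rcases hu with h | h
        · exact h ▸ hw.2
        · exact (Set.mem_singleton_iff.mp h) ▸ hw'
      have := arrow {w, w'} S hsub hSF ⟨w, hw, by simp⟩
      show w ∈ γ {w, w'}
      rw [this]
      exact ⟨hw, by simp⟩
    · rintro ⟨hwS, hall⟩
      obtain ⟨u, hu⟩ := hγne S hSne
      exact key S w u hSF hwS hu.2 (hall u hu.2) hu
  -- rank function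
  set f : W → ℕ := fun w => (Finset.univ.filter fun u => u ∈ Fᶜ ∧ ¬ rel u w).card
    with hfdef
  have frep : ∀ w ∈ Fᶜ, ∀ w' ∈ Fᶜ, (rel w w' ↔ f w' ≤ f w) := by
    intro w hw w' hw'
    constructor
    · intro hrel
      apply Finset.card_le_card
      apply Finset.monotone_filter_right
      rintro u - ⟨huF, hur⟩
      refine ⟨huF, fun hur' => hur ?_⟩
      exact htrans u w w' huF hw hw' hur' hrel
    · intro hle
      by_contra hrel
      have hrel' : rel w' w := (htotal w w').resolve_left hrel
      have hsub : (Finset.univ.filter fun u => u ∈ Fᶜ ∧ ¬ rel u w) ⊆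
          (Finset.univ.filter fun u => u ∈ Fᶜ ∧ ¬ rel u w') := by
        apply Finset.monotone_filter_right
        rintro u - ⟨huF, hur⟩
        refine ⟨huF, fun hur' => hur ?_⟩
        exact htrans u w' w huF hw' hw hur' hrel'
      have hwmem : w ∈ (Finset.univ.filter fun u => u ∈ Fᶜ ∧ ¬ rel u w') := by
        simp only [Finset.mem_filter, Finset.mem_univ, true_and]
        exact ⟨hw, hrel⟩
      have hwnm : w ∉ (Finset.univ.filter fun u => u ∈ Fᶜ ∧ ¬ rel u w) := by
        simp only [Finset.mem_filter, Finset.mem_univ, true_and, not_and, not_not]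
        intro _; exact hrefl w
      have : f w < f w' :=
        Finset.card_lt_card ((Finset.ssubset_iff_of_subset hsub).mpr ⟨w, hwmem, hwnm⟩)
      omega
  -- the probability distribution
  set g : W → ℝ := fun w => if w ∈ F then 1 else (f w + 1 : ℝ) with hgdef
  have hgpos : ∀ w, 0 < g w := by
    intro w
    rw [hgdef]
    by_cases h : w ∈ F
    · simp [h]
    · simp only [h, if_false]
      positivity
  have hTpos : 0 < ∑ w, g w :=
    Finset.sum_pos (fun w _ => hgpos w) Finset.univ_nonempty
  set P : W → ℝ := fun w => g w / ∑ w, g w with hPdef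
  have hPpos : ∀ w, 0 < P w := fun w => div_pos (hgpos w) hTpos
  have hPsum : ∑ w, P w = 1 := by
    rw [hPdef, ← Finset.sum_div, div_self (ne_of_gt hTpos)]
  have hPcomp : ∀ w ∈ Fᶜ, ∀ w' ∈ Fᶜ, (P w' ≤ P w ↔ rel w w') := by
    intro w hw w' hw'
    rw [hPdef]
    rw [div_le_div_iff_of_pos_right hTpos, hgdef]
    simp only [Set.mem_compl_iff] at hw hw'
    simp only [hw, hw', if_false]
    rw [frep w hw w' hw']
    constructor
    · intro h
      have : (f w' : ℝ) ≤ f w := by linarith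
      exact_mod_cast this
    · intro h
      have : (f w' : ℝ) ≤ f w := by exact_mod_cast h
      linarith
  refine ⟨P, hPpos, hPsum, fun B => ⟨fun hFB => ?_, h2 B⟩⟩
  rw [← Set.compl_eq_univ_diff]
  -- c B = F ∪ γ Bᶜ
  have hdecomp : c B = F ∪ γ Bᶜ := by
    apply Set.Subset.antisymm
    · intro w hw
      by_cases hwB : w ∈ B
      · exact Or.inl (h5 B ⟨hw, hwB⟩)
      · right
        exact ⟨by rwa [compl_compl], hwB⟩
    · rintro w (hw | hw)
      · exact h1 B hw
      · have := hw.1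
        rwa [compl_compl] at this
  rw [hdecomp]
  congr 1
  -- γ Bᶜ = MaxP P Bᶜ
  rcases Set.eq_empty_or_nonempty (Bᶜ) with hBc | hBc
  · rw [hBc]
    simp [hγdef, MaxP]
  · have hBF : Bᶜ ⊆ Fᶜ := Set.compl_subset_compl.mpr hFB
    rw [maxchar Bᶜ hBF hBc]
    ext w
    simp only [MaxP, Set.mem_setOf_eq]
    constructor
    · rintro ⟨hwB, hall⟩
      exact ⟨hwB, fun w' hw' => (hPcomp w (hBF hwB) w' (hBF hw')).mpr (hall w' hw')⟩
    · rintro ⟨hwB, hall⟩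
      exact ⟨hwB, fun w' hw' => (hPcomp w (hBF hwB) w' (hBF hw')).mp (hall w' hw')⟩
end

section
/- Let A, B ⊆ W with A⁺ ≠ ∅, A⁺ ⊆ B and X ⊄ B, and set p(B) = max{P(w) : w ∈ X ∖ B}. Define T(A,B) = ⋂ {D ⊆ W : C(A, B ∩ D) ⊆ D} (the model set of the conjunction of all formulas β such that the KM-contraction of the belief by the conjunction of α and β P-entails β). Then T(A,B) = A⁺ ∪ {w ∈ X : P(w) ≥ p(B)}; that is, the severe withdrawal defined from the KM-contraction equals the smallest sphere around the belief that intersects the possible countermodels of B. -/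
open scoped Classical

/-- The severe withdrawal defined from the KM-contraction equals the smallest sphere
around the belief that intersects the possible countermodels of `B`. -/
theorem severe_withdrawal_eq_smallest_sphere
    {W : Type*} [Fintype W] [Nonempty W] (P : W → ℝ)
    (hP0 : ∀ w, 0 ≤ P w) (hP1 : ∑ w, P w = 1)
    (A B : Set W) (hAne : (A ∩ poss P).Nonempty)
    (hAB : A ∩ poss P ⊆ B) (hXB : ¬ poss P ⊆ B)
    (pB : ℝ) (hpB : IsGreatest (P '' (poss P \ B)) pB) :
    ⋂₀ {D : Set W | Ckm P A (B ∩ D) ⊆ D}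
      = (A ∩ poss P) ∪ {w ∈ poss P | pB ≤ P w} := by
  obtain ⟨hpBmem, hpBub⟩ := hpB
  obtain ⟨w0, hw01, hw02⟩ := hpBmem
  apply Set.Subset.antisymm
  · intro x hx
    apply hx
    show Ckm P A (B ∩ ((A ∩ poss P) ∪ {w ∈ poss P | pB ≤ P w})) ⊆ _
    have hsub0 : A ∩ poss P ⊆ B ∩ ((A ∩ poss P) ∪ {w ∈ poss P | pB ≤ P w}) :=
      fun a ha => ⟨hAB ha, Or.inl ha⟩
    rw [Ckm, if_pos hsub0]
    rintro w (h | ⟨⟨hwX, _⟩, hmax⟩)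
    · exact Or.inl h
    · refine Or.inr ⟨hwX, ?_⟩
      have hw0' : w0 ∈ poss P \ (B ∩ ((A ∩ poss P) ∪ {w ∈ poss P | pB ≤ P w})) :=
        ⟨hw01.1, fun h => hw01.2 h.1⟩
      calc pB = P w0 := hw02.symm
        _ ≤ P w := hmax w0 hw0'
  · intro w hw D hD
    simp only [Set.mem_setOf_eq] at hD
    by_cases hsub : A ∩ poss P ⊆ B ∩ D
    · have hC : (A ∩ poss P) ∪ MaxP P (poss P \ (B ∩ D)) ⊆ D := by
        rwa [Ckm, if_pos hsub] at hD
      have hne : (poss P \ (B ∩ D)).Nonempty := ⟨w0, hw01.1, fun h => hw01.2 h.1⟩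
      obtain ⟨m, hm, hmmax⟩ :=
        Set.exists_max_image (poss P \ (B ∩ D)) P (Set.toFinite _) hne
      have hmD : m ∈ D := hC (Or.inr ⟨hm, hmmax⟩)
      have hmnB : m ∉ B := fun h => hm.2 ⟨h, hmD⟩
      have hmle : P m ≤ pB := hpBub ⟨m, ⟨hm.1, hmnB⟩, rfl⟩
      rcases hw with h | ⟨hwX, hwpB⟩
      · exact hC (Or.inl h)
      · by_contra hwD
        have hwmem : w ∈ poss P \ (B ∩ D) := ⟨hwX, fun h' => hwD h'.2⟩
        exact hwD (hC (Or.inr ⟨hwmem, fun w' hw' =>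
          le_trans (hmmax w' hw') (le_trans hmle hwpB)⟩))
    · rw [Ckm, if_neg hsub] at hD
      exact (hsub (Set.subset_inter hAB hD)).elim
end

section
/- Let A, B, B' ⊆ W with A⁺ ≠ ∅. The sphere-based severe withdrawal operator SW satisfies the severe withdrawal postulates: (÷÷1) inclusion: A⁺ ⊆ SW(A,B); (÷÷2) if A⁺ ⊄ B or X ⊆ B then SW(A,B) ≡_P A; (÷÷3) success: if X ⊄ B then SW(A,B) ⊄ B; (÷÷4) extensionality: if B ∩ X = B' ∩ X then SW(A,B) = SW(A,B'); (÷÷6a) antitony: if X ⊄ B then SW(A, B ∩ B') ⊆ SW(A,B); (÷÷7) if SW(A, B ∩ B') ⊄ B then SW(A,B) ⊆ SW(A, B ∩ B'). -/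
open scoped Classical

/-- The maximal probability of a possible countermodel of `B`. -/
noncomputable def pmax {W : Type*} (P : W → ℝ) (B : Set W) : ℝ :=
  sSup (P '' (poss P \ B))

/-- The sphere-based severe withdrawal of `B` from `A`. -/
noncomputable def SW {W : Type*} (P : W → ℝ) (A B : Set W) : Set W :=
  if A ∩ poss P ⊆ B ∧ ¬ poss P ⊆ B then
    (A ∩ poss P) ∪ {w ∈ poss P | pmax P B ≤ P w}
  else A ∩ poss P

lemma le_pmax {W : Type*} [Fintype W] (P : W → ℝ) {B : Set W} {w : W}
    (hw : w ∈ poss P \ B) : P w ≤ pmax P B :=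
  le_csSup (Set.Finite.bddAbove ((Set.toFinite _).image _)) ⟨w, hw, rfl⟩

lemma pmax_mem {W : Type*} [Fintype W] (P : W → ℝ) {B : Set W}
    (h : ¬ poss P ⊆ B) : ∃ w ∈ poss P \ B, P w = pmax P B := by
  obtain ⟨w, hw, hwB⟩ := Set.not_subset.mp h
  have hne : (P '' (poss P \ B)).Nonempty := ⟨P w, w, ⟨hw, hwB⟩, rfl⟩
  obtain ⟨v, hv, hPv⟩ := hne.csSup_mem ((Set.toFinite _).image _)
  exact ⟨v, hv, hPv⟩

/-- The sphere-based severe withdrawal operator satisfies the severe withdrawal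
postulates (÷÷1)-(÷÷4), (÷÷6a) and (÷÷7); since its output is contained in the set of
possible worlds, the P-entailments reduce to inclusions and P-equivalence to equality
of possible parts. -/
theorem severe_withdrawal_satisfies_postulates
    {W : Type*} [Fintype W] [Nonempty W] (P : W → ℝ)
    (hP0 : ∀ w, 0 ≤ P w) (hP1 : ∑ w, P w = 1)
    (A B B' : Set W) (hA : (A ∩ poss P).Nonempty) :
    -- (÷÷1) inclusion
    (A ∩ poss P ⊆ SW P A B) ∧
    -- (÷÷2) vacuity
    ((¬ A ∩ poss P ⊆ B ∨ poss P ⊆ B) → SW P A B ∩ poss P = A ∩ poss P) ∧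
    -- (÷÷3) success
    (¬ poss P ⊆ B → ¬ SW P A B ⊆ B) ∧
    -- (÷÷4) extensionality
    (B ∩ poss P = B' ∩ poss P → SW P A B = SW P A B') ∧
    -- (÷÷6a) antitony
    (¬ poss P ⊆ B → SW P A (B ∩ B') ⊆ SW P A B) ∧
    -- (÷÷7)
    (¬ SW P A (B ∩ B') ⊆ B → SW P A B ⊆ SW P A (B ∩ B')) := by
  have incl : ∀ C : Set W, A ∩ poss P ⊆ SW P A C := by
    intro C
    unfold SW
    split
    · exact Set.subset_union_left
    · exact le_refl _
  refine ⟨incl B, ?_, ?_, ?_, ?_, ?_⟩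
  · -- (÷÷2)
    intro h
    have hcond : ¬ (A ∩ poss P ⊆ B ∧ ¬ poss P ⊆ B) := by tauto
    unfold SW
    rw [if_neg hcond, Set.inter_assoc, Set.inter_self]
  · -- (÷÷3)
    intro hX
    obtain ⟨v, hv, hPv⟩ := pmax_mem P hX
    unfold SW
    split
    · intro hsub
      exact hv.2 (hsub (Or.inr ⟨hv.1, hPv.ge⟩))
    · rename_i hc
      intro hsub
      rcases not_and_or.mp hc with hc | hc
      · exact hc hsub
      · exact hc hX
  · -- (÷÷4)
    intro hBB
    have hdiff : poss P \ B = poss P \ B' := by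
      ext w
      constructor
      · rintro ⟨h1, h2⟩
        refine ⟨h1, fun hB' => h2 ?_⟩
        have : w ∈ B' ∩ poss P := ⟨hB', h1⟩
        rw [← hBB] at this; exact this.1
      · rintro ⟨h1, h2⟩
        refine ⟨h1, fun hB => h2 ?_⟩
        have : w ∈ B ∩ poss P := ⟨hB, h1⟩
        rw [hBB] at this; exact this.1
    have hpmax : pmax P B = pmax P B' := by unfold pmax; rw [hdiff]
    have h1 : (A ∩ poss P ⊆ B) ↔ (A ∩ poss P ⊆ B') := by
      constructor
      · intro h w hw
        have : w ∈ B ∩ poss P := ⟨h hw, hw.2⟩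
        rw [hBB] at this; exact this.1
      · intro h w hw
        have : w ∈ B' ∩ poss P := ⟨h hw, hw.2⟩
        rw [← hBB] at this; exact this.1
    have h2 : (poss P ⊆ B) ↔ (poss P ⊆ B') := by
      constructor
      · intro h w hw
        have : w ∈ B ∩ poss P := ⟨h hw, hw⟩
        rw [hBB] at this; exact this.1
      · intro h w hw
        have : w ∈ B' ∩ poss P := ⟨h hw, hw⟩
        rw [← hBB] at this; exact this.1
    unfold SW
    rw [hpmax]
    by_cases hc : A ∩ poss P ⊆ B' ∧ ¬ poss P ⊆ B'
    · rw [if_pos hc, if_pos ⟨h1.mpr hc.1, fun h => hc.2 (h2.mp h)⟩]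
    · rw [if_neg hc, if_neg (by tauto)]
  · -- (÷÷6a)
    intro hX
    by_cases hc : A ∩ poss P ⊆ B ∩ B' ∧ ¬ poss P ⊆ B ∩ B'
    · have hcB : A ∩ poss P ⊆ B ∧ ¬ poss P ⊆ B :=
        ⟨fun w hw => (hc.1 hw).1, hX⟩
      have hle : pmax P B ≤ pmax P (B ∩ B') := by
        obtain ⟨v, hv, hPv⟩ := pmax_mem P hX
        calc pmax P B = P v := hPv.symm
        _ ≤ pmax P (B ∩ B') := le_pmax P ⟨hv.1, fun h => hv.2 h.1⟩
      unfold SW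
      rw [if_pos hc, if_pos hcB]
      rintro w (hw | ⟨hw1, hw2⟩)
      · exact Or.inl hw
      · exact Or.inr ⟨hw1, hle.trans hw2⟩
    · unfold SW
      rw [if_neg hc]
      exact incl B
  · -- (÷÷7)
    intro h7
    by_cases hc : A ∩ poss P ⊆ B ∩ B' ∧ ¬ poss P ⊆ B ∩ B'
    · by_cases hcB : A ∩ poss P ⊆ B ∧ ¬ poss P ⊆ B
      · -- get witness in SW(A,C) \ B
        obtain ⟨v, hv, hvB⟩ := Set.not_subset.mp h7
        have hvS : v ∈ poss P ∧ pmax P (B ∩ B') ≤ P v := by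
          unfold SW at hv
          rw [if_pos hc] at hv
          rcases hv with hv | hv
          · exact absurd (hcB.1 hv) hvB
          · exact ⟨hv.1, hv.2⟩
        have hle : pmax P (B ∩ B') ≤ pmax P B :=
          hvS.2.trans (le_pmax P ⟨hvS.1, hvB⟩)
        unfold SW
        rw [if_pos hc, if_pos hcB]
        rintro w (hw | ⟨hw1, hw2⟩)
        · exact Or.inl hw
        · exact Or.inr ⟨hw1, hle.trans hw2⟩
      · -- SW(A,B) = A⁺ ⊆ SW(A,C)
        unfold SW
        rw [if_neg hcB, if_pos hc]
        exact Set.subset_union_left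
    · -- SW(A,C) = A⁺, and A⁺ ⊄ B
      have hAC : SW P A (B ∩ B') = A ∩ poss P := by
        unfold SW; rw [if_neg hc]
      rw [hAC] at h7 ⊢
      have hcB : ¬ (A ∩ poss P ⊆ B ∧ ¬ poss P ⊆ B) := fun h => h7 h.1
      unfold SW
      rw [if_neg hcB]
end

section
/- For all A, B ⊆ W with A⁺ ≠ ∅ and P(A) > 0: the KM-contraction P-entails the severe withdrawal, i.e. C(A,B) ⊆ SW(A,B); consequently κ_S(SW(A,B)) ≤ κ_S(C(A,B)), and the information loss of KM-contraction is at most that of severe withdrawal: κ_S(A) − κ_S(C(A,B)) ≤ κ_S(A) − κ_S(SW(A,B)). -/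
open scoped Classical

lemma Pr_mono {W : Type*} [Fintype W] (P : W → ℝ) (hP0 : ∀ w, 0 ≤ P w)
    {A C : Set W} (h : A ⊆ C) : Pr P A ≤ Pr P C := by
  apply Finset.sum_le_sum
  intro i _
  exact Set.indicator_le_indicator_of_subset h hP0 i

lemma Pr_pos {W : Type*} [Fintype W] (P : W → ℝ) (hP0 : ∀ w, 0 ≤ P w)
    {S : Set W} {w : W} (hw : w ∈ S) (hpw : 0 < P w) : 0 < Pr P S := by
  have h1 : P w ≤ Pr P S := by
    have := Finset.single_le_sum (f := fun x => Set.indicator S P x)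
      (fun i _ => Set.indicator_nonneg (fun a _ => hP0 a) i) (Finset.mem_univ w)
    simpa [Pr, Set.indicator_of_mem hw] using this
  linarith

/-- The KM-contraction P-entails the severe withdrawal; consequently the severe
withdrawal carries no more knowledge and loses at least as much information. -/
theorem KMcontraction_entails_severe_withdrawal
    {W : Type*} [Fintype W] [Nonempty W] (P : W → ℝ)
    (hP0 : ∀ w, 0 ≤ P w) (hP1 : ∑ w, P w = 1)
    (A B : Set W) (hA : (A ∩ poss P).Nonempty) (hPA : 0 < Pr P A) :
    Ckm P A B ⊆ SW P A B ∧
    kS P (SW P A B) ≤ kS P (Ckm P A B) ∧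
    kS P A - kS P (Ckm P A B) ≤ kS P A - kS P (SW P A B) := by
  have hsub : Ckm P A B ⊆ SW P A B := by
    unfold Ckm SW
    by_cases h1 : A ∩ poss P ⊆ B
    · by_cases h2 : poss P ⊆ B
      · simp only [h1, h2, if_pos, not_true, and_false, if_false]
        intro w hw
        rcases hw with hw | hw
        · exact hw
        · exact absurd (h2 hw.1.1) hw.1.2
      · rw [if_pos h1, if_pos ⟨h1, h2⟩]
        apply Set.union_subset_union_right
        intro w hw
        obtain ⟨⟨hwposs, hwB⟩, hmax⟩ := hw
        refine ⟨hwposs, ?_⟩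
        apply csSup_le
        · obtain ⟨x, hx⟩ := Set.not_subset.mp h2
          exact ⟨P x, ⟨x, ⟨hx.1, hx.2⟩, rfl⟩⟩
        · rintro y ⟨z, hz, rfl⟩
          exact hmax z hz
    · rw [if_neg h1, if_neg (fun h => h1 h.1)]
  have hApos : 0 < Pr P (A ∩ poss P) := by
    obtain ⟨w, hw⟩ := hA
    exact Pr_pos P hP0 hw hw.2
  have hAsubC : A ∩ poss P ⊆ Ckm P A B := by
    unfold Ckm
    split
    · exact Set.subset_union_left
    · exact subset_rfl
  have hCpos : 0 < Pr P (Ckm P A B) :=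
    lt_of_lt_of_le hApos (Pr_mono P hP0 hAsubC)
  have hle : Pr P (Ckm P A B) ≤ Pr P (SW P A B) := Pr_mono P hP0 hsub
  have hSpos : 0 < Pr P (SW P A B) := lt_of_lt_of_le hCpos hle
  have hlog : Real.logb 2 (Pr P (Ckm P A B)) ≤ Real.logb 2 (Pr P (SW P A B)) :=
    (Real.logb_le_logb (by norm_num : (1:ℝ) < 2) hCpos hSpos).mpr hle
  refine ⟨hsub, ?_, ?_⟩ <;> unfold kS <;> linarith
end

section
/- For all A, B ⊆ W with A⁺ ≠ ∅, the KM-revision defined by the Levi identity satisfies: R(A,B) = Max_P(B ∩ X) if A⁺ ∩ B = ∅, and R(A,B) = A⁺ ∩ B otherwise. -/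
open scoped Classical

/-- The KM-revision of `A` by `B`, defined via the Levi identity. -/
noncomputable def Rkm {W : Type*} (P : W → ℝ) (A B : Set W) : Set W :=
  Ckm P A (Set.univ \ B) ∩ B

/-- Characterisation of KM-revision: it is the set of probability-maximal possible
models of `B` when the belief is P-inconsistent with `B`, and the possible models of
the belief satisfying `B` otherwise. -/
theorem KMrevision_characterisation
    {W : Type*} [Fintype W] [Nonempty W] (P : W → ℝ)
    (hP0 : ∀ w, 0 ≤ P w) (hP1 : ∑ w, P w = 1)
    (A B : Set W) (hA : (A ∩ poss P).Nonempty) :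
    (A ∩ poss P ∩ B = ∅ → Rkm P A B = MaxP P (B ∩ poss P)) ∧
    (A ∩ poss P ∩ B ≠ ∅ → Rkm P A B = A ∩ poss P ∩ B) := by
  constructor
  · intro h
    have hsub : A ∩ poss P ⊆ Set.univ \ B := by
      intro w hw
      refine ⟨trivial, fun hwB => ?_⟩
      have : w ∈ A ∩ poss P ∩ B := ⟨hw, hwB⟩
      simp [h] at this
    have hdiff : poss P \ (Set.univ \ B) = B ∩ poss P := by
      ext w; simp [Set.mem_diff, and_comm]
    rw [Rkm, Ckm, if_pos hsub, hdiff, Set.union_inter_distrib_right]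
    have h1 : A ∩ poss P ∩ B = ∅ := h
    rw [h1, Set.empty_union]
    apply Set.inter_eq_left.mpr
    intro w hw
    exact hw.1.1
  · intro h
    have hsub : ¬ (A ∩ poss P ⊆ Set.univ \ B) := by
      intro hs
      apply h
      ext w
      simp only [Set.mem_inter_iff, Set.mem_empty_iff_false, iff_false]
      rintro ⟨hw, hwB⟩
      exact (hs hw).2 hwB
    rw [Rkm, Ckm, if_neg hsub]
end
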